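/- Let V be a vector space over 𝔽₂ of finite positive dimension endowed with a symplectic form B. Let S be a spanning set of V such that G(S) is connected. Then there exists a subset J ⊆ S such that J is linearly independent, G(J) is connected, and J is a basis of V; moreover, any subset J of S maximal with respect to inclusion among linearly independent subsets I of S with G(I) connected is a basis of V. -/

import Mathlib

open Module

/-- The transvection with direction `α`, as a linear automorphism of `V`
(over `𝔽₂`, for an alternating form `B` it is an involution). -/
def transvection {V : Type} [AddCommGroup V] [Module (ZMod 2) V]
    (B : LinearMap.BilinForm (ZMod 2) V) (hB : ∀ v, B v v = 0) (α : V) :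
    V ≃ₗ[ZMod 2] V :=
  letI f : V →ₗ[ZMod 2] V :=
    { toFun := fun β => β + B β α • α
      map_add' := fun β γ => by
        simp only [map_add, LinearMap.add_apply, add_smul]
        abel
      map_smul' := fun c β => by
        simp only [map_smul, LinearMap.smul_apply, smul_eq_mul, RingHom.id_apply, smul_add,
          smul_smul] }
  haveI key : ∀ β, f (f β) = β := by
    intro β
    show (β + B β α • α) + B (β + B β α • α) α • α = β
    have h1 : B (β + B β α • α) α = B β α := by
      simp [map_add, hB α, LinearMap.add_apply, LinearMap.smul_apply]
    rw [h1]
    have h2 : B β α • α + B β α • α = (0 : V) := by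
      rw [← add_smul]
      have : B β α + B β α = 0 := by
        have : (2 : ZMod 2) = 0 := by decide
        calc B β α + B β α = 2 * B β α := by ring
        _ = 0 := by rw [this]; ring
      rw [this, zero_smul]
    rw [add_assoc, h2, add_zero]
  LinearEquiv.ofLinear f f (by ext β; exact key β) (by ext β; exact key β)

/-- the subgroup `Tv(S)` generated by the transvections with directions in `S`. -/
def Tv {V : Type} [AddCommGroup V] [Module (ZMod 2) V]
    (B : LinearMap.BilinForm (ZMod 2) V) (hB : ∀ v, B v v = 0) (S : Set V) :
    Subgroup (V ≃ₗ[ZMod 2] V) :=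
  Subgroup.closure ((fun α => transvection B hB α) '' S)

/-- The graph `G(S)`: vertex set `S`, with `α, β` adjacent iff `B α β = 1`. -/
def graphOf {V : Type} [AddCommGroup V] [Module (ZMod 2) V]
    (B : LinearMap.BilinForm (ZMod 2) V) (hB : ∀ v, B v v = 0) (S : Set V) :
    SimpleGraph S where
  Adj a b := B a b = 1
  symm := by
    constructor
    intro a b hab
    beta_reduce at hab ⊢
    have h := hB ((a : V) + b)
    simp only [map_add, LinearMap.add_apply, hB] at h
    -- h : B b a + B a b = 0 (after simp of diagonal terms)
    have h' : B (b : V) a + B (a : V) b = 0 := by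
      simpa [hB] using h
    have : B (b : V) a = B (a : V) b := by
      have := eq_neg_of_add_eq_zero_left h'
      rwa [CharTwo.neg_eq] at this
    rw [this]; exact hab
  loopless := by
    constructor
    intro a h
    beta_reduce at h
    rw [hB] at h
    exact zero_ne_one h

/-- number of connected components of a graph. -/
noncomputable def numComponents {α : Type} (G : SimpleGraph α) : ℕ :=
  Nat.card G.ConnectedComponent

/-- A cut-vertex: a vertex whose deletion increases the number of components. -/
noncomputable def IsCutVertex {α : Type} (G : SimpleGraph α) (u : α) : Prop :=
  numComponents G < numComponents (G.induce {v | v ≠ u})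

/-- A block: a maximal (vertex set of a) connected induced subgraph having no cut-vertex. -/
noncomputable def IsBlock {α : Type} (G : SimpleGraph α) (A : Set α) : Prop :=
  ((G.induce A).Connected ∧ ∀ u, ¬ IsCutVertex (G.induce A) u) ∧
    ∀ A' : Set α, A ⊆ A' → ((G.induce A').Connected ∧ ∀ u, ¬ IsCutVertex (G.induce A') u) →
      A' = A

/-- A block graph: a connected graph all of whose blocks are complete. -/
noncomputable def IsBlockGraph {α : Type} (G : SimpleGraph α) : Prop :=
  G.Connected ∧ ∀ A : Set α, IsBlock G A → A.Pairwise G.Adj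

/-- Claw-free: no induced subgraph isomorphic to `K_{1,3}`. -/
def ClawFree {α : Type} (G : SimpleGraph α) : Prop :=
  IsEmpty (completeBipartiteGraph (Fin 1) (Fin 3) ↪g G)

/-- `G` is (isomorphic to) the line graph of a tree. -/
def IsLineGraphOfTree {α : Type} (G : SimpleGraph α) : Prop :=
  ∃ (W : Type) (T : SimpleGraph W), T.IsTree ∧ Nonempty (G ≃g T.lineGraph)

/-- A path graph: a tree in which every vertex has degree at most two. -/
def IsPathGraph {α : Type} (G : SimpleGraph α) : Prop :=
  G.IsTree ∧ ∀ v a b c : α, G.Adj v a → G.Adj v b → G.Adj v c → a = b ∨ a = c ∨ b = c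

/-- The relation `𝓘₀` on linearly independent subsets of `V`. -/
def IRelZero {V : Type} [AddCommGroup V] [Module (ZMod 2) V]
    (B : LinearMap.BilinForm (ZMod 2) V) (hB : ∀ v, B v v = 0) (S S' : Set V) : Prop :=
  LinearIndependent (ZMod 2) ((↑) : S → V) ∧ LinearIndependent (ZMod 2) ((↑) : S' → V) ∧
    ∃ α ∈ S, ∃ β ∈ S, S' = insert (transvection B hB α β) (S \ {β})

/-- The equivalence relation `𝓘` generated by `𝓘₀`. -/
def IRel {V : Type} [AddCommGroup V] [Module (ZMod 2) V]
    (B : LinearMap.BilinForm (ZMod 2) V) (hB : ∀ v, B v v = 0) : Set V → Set V → Prop :=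
  Relation.EqvGen (IRelZero B hB)

/-
A maximal linearly independent `J ⊆ S` with `G(J)` connected must span `V`: otherwise, since
`G(S)` is connected, some edge of `G(S)` joins a vector `x ∈ span J` to a vector `y ∉ span J`.
As `B x y = 1` and `x ∈ span J`, the functional `B · y` does not vanish on `J`, so `y` is
adjacent to some `j ∈ J`, and `J ∪ {y}` is a larger independent set with connected graph.
Such maximal sets exist because `V` is finite, starting from a singleton `{s}` with `s ≠ 0`.
-/

theorem Submodule.exists_mem_apply_ne_zero_of_mem_span {R M : Type*} [Semiring R]
    [AddCommMonoid M] [Module R M] (f : M →ₗ[R] R) {J : Set M} {u : M}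
    (hu : u ∈ Submodule.span R J) (hfu : f u ≠ 0) : ∃ j ∈ J, f j ≠ 0 := by
  by_contra! h
  exact hfu ((Submodule.span_le (p := LinearMap.ker f)).mpr h hu)

section GraphOf

variable {V : Type} [AddCommGroup V] [Module (ZMod 2) V]
  (B : LinearMap.BilinForm (ZMod 2) V) (hB : ∀ v, B v v = 0)

theorem graphOf_connected_singleton (s : V) : (graphOf B hB {s}).Connected :=
  haveI : Nonempty ({s} : Set V) := ⟨⟨s, rfl⟩⟩
  .of_subsingleton

theorem graphOf_connected_insert {J : Set V} (hJ : (graphOf B hB J).Connected) {v j : V}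
    (hj : j ∈ J) (hjv : B j v = 1) : (graphOf B hB (insert v J)).Connected := by
  let incl : graphOf B hB J →g graphOf B hB (insert v J) :=
    { toFun := fun x => ⟨x, Set.mem_insert_of_mem _ x.2⟩
      map_rel' := id }
  let j' : ↥(insert v J) := ⟨j, Set.mem_insert_of_mem v hj⟩
  have reach_j : ∀ a, (graphOf B hB (insert v J)).Reachable a j' := by
    rintro ⟨a, rfl | ha⟩
    · exact (SimpleGraph.Adj.reachable (G := graphOf B hB _) (u := j')
        (v := ⟨a, Set.mem_insert a J⟩) hjv).symm
    · exact (hJ.preconnected ⟨a, ha⟩ ⟨j, hj⟩).map incl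
  have : Nonempty ↥(insert v J) := ⟨j'⟩
  exact ⟨fun a b => (reach_j a).trans (reach_j b).symm⟩

theorem span_eq_top_of_maximal {S : Set V} (hspan : Submodule.span (ZMod 2) S = ⊤)
    (hconn : (graphOf B hB S).Connected) {J : Set V} (hJS : J ⊆ S)
    (hind : LinearIndependent (ZMod 2) ((↑) : J → V)) (hJ : (graphOf B hB J).Connected)
    (hmax : ∀ I : Set V, I ⊆ S → LinearIndependent (ZMod 2) ((↑) : I → V) →
      (graphOf B hB I).Connected → J ⊆ I → I = J) :
    Submodule.span (ZMod 2) J = ⊤ := by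
  by_contra hJtop
  obtain ⟨s, hsS, hs⟩ : ∃ s ∈ S, s ∉ Submodule.span (ZMod 2) J := by
    by_contra! h
    exact hJtop (top_le_iff.mp (hspan ▸ Submodule.span_le.mpr h))
  obtain ⟨j₀⟩ := hJ.nonempty
  obtain ⟨w⟩ := hconn.preconnected ⟨j₀, hJS j₀.2⟩ ⟨s, hsS⟩
  obtain ⟨d, -, hx, hy⟩ := w.exists_boundary_dart {x | (x : V) ∈ Submodule.span (ZMod 2) J}
    (Submodule.subset_span j₀.2) hs
  let y : V := d.snd
  have hxy : B d.fst y = 1 := d.adj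
  obtain ⟨j, hjJ, hjy⟩ := Submodule.exists_mem_apply_ne_zero_of_mem_span (B.flip y) hx
    (hxy ▸ one_ne_zero)
  replace hjy : B j y = 1 := Fin.eq_one_of_ne_zero _ hjy
  have hyJ : y ∈ J := by
    rw [← hmax (insert y J) (Set.insert_subset d.snd.2 hJS)
      (linearIndependent_set_coe_iff.mp hind |>.id_insert hy).linearIndependent
      (graphOf_connected_insert B hB hJ hjJ hjy) (Set.subset_insert y J)]
    exact Set.mem_insert y J
  exact hy (Submodule.subset_span hyJ)

theorem exists_maximal_of_mem_ne_zero [Finite V] {S : Set V} {s : V} (hsS : s ∈ S) (hs : s ≠ 0) :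
    ∃ J : Set V, J ⊆ S ∧ LinearIndependent (ZMod 2) ((↑) : J → V) ∧
      (graphOf B hB J).Connected ∧
      ∀ I : Set V, I ⊆ S → LinearIndependent (ZMod 2) ((↑) : I → V) →
        (graphOf B hB I).Connected → J ⊆ I → I = J := by
  let F : Set (Set V) := {I | I ⊆ S ∧ LinearIndependent (ZMod 2) ((↑) : I → V) ∧
    (graphOf B hB I).Connected}
  have hsF : {s} ∈ F := ⟨Set.singleton_subset_iff.mpr hsS,
    (LinearIndepOn.singleton (v := id) hs).linearIndependent, graphOf_connected_singleton B hB s⟩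
  obtain ⟨J, ⟨hJS, hind, hJ⟩, hmax⟩ := F.toFinite.exists_maximal ⟨_, hsF⟩
  exact ⟨J, hJS, hind, hJ, fun I hIS hindI hI hJI => (hmax ⟨hIS, hindI, hI⟩ hJI).antisymm hJI⟩

end GraphOf

/-- if `S` spans `V` and `G(S)` is connected, then there is a subset `J ⊆ S`
which is linearly independent, has `G(J)` connected and is a basis of `V`; moreover any
`J ⊆ S` maximal under inclusion among the linearly independent subsets `I ⊆ S` with `G(I)`
connected is a basis of `V`. -/
theorem stmt17 {V : Type} [AddCommGroup V] [Module (ZMod 2) V] [FiniteDimensional (ZMod 2) V]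
    (hdim : 0 < Module.finrank (ZMod 2) V)
    (B : LinearMap.BilinForm (ZMod 2) V) (hB : ∀ v, B v v = 0)
    (S : Set V) (hspan : Submodule.span (ZMod 2) S = ⊤)
    (hconn : (graphOf B hB S).Connected) :
    (∃ J : Set V, J ⊆ S ∧ LinearIndependent (ZMod 2) ((↑) : J → V) ∧
        (graphOf B hB J).Connected ∧ Submodule.span (ZMod 2) J = ⊤) ∧
      ∀ J : Set V, J ⊆ S → LinearIndependent (ZMod 2) ((↑) : J → V) →
        (graphOf B hB J).Connected →
        (∀ I : Set V, I ⊆ S → LinearIndependent (ZMod 2) ((↑) : I → V) →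
          (graphOf B hB I).Connected → J ⊆ I → I = J) →
        LinearIndependent (ZMod 2) ((↑) : J → V) ∧ Submodule.span (ZMod 2) J = ⊤ := by
  have : Nontrivial V := Module.nontrivial_of_finrank_pos hdim
  have : Finite V := Module.finite_of_finite (ZMod 2)
  obtain ⟨s, hsS, hs⟩ : ∃ s ∈ S, s ≠ 0 := by
    by_contra! h
    exact bot_ne_top ((Submodule.span_eq_bot (R := ZMod 2)).mpr h ▸ hspan)
  obtain ⟨J, hJS, hind, hJ, hmax⟩ := exists_maximal_of_mem_ne_zero B hB hsS hs
  refine ⟨⟨J, hJS, hind, hJ, span_eq_top_of_maximal B hB hspan hconn hJS hind hJ hmax⟩, ?_⟩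
  intro J hJS hind hJ hmax
  exact ⟨hind, span_eq_top_of_maximal B hB hspan hconn hJS hind hJ hmax⟩
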